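/- Let w = s_{π(1)} ⋯ s_{π(n-1)} be a product of all standard Coxeter generators of S_n in some order. Then either w(1) = 2 or w(2) = 1. -/

import Mathlib

/-!
Write `w = u * s₁ * v`, splitting the word at the unique occurrence of `s₁ = (1 2)`. No letter
of `u` or `v` is `s₁`, so both fix the point `1`, and `s₂ = (2 3)` occurs in at most one of them.
If `s₂ ∉ u`, then `u` also fixes `2` and `w 1 = u (s₁ (v 1)) = u 2 = 2`; if `s₂ ∉ v`, then
symmetrically `w 2 = u (s₁ (v 2)) = u 1 = 1`.
-/

open Equiv

theorem List.Nodup.mem_of_length_eq_card {α : Type*} [Fintype α] {l : List α} (hl : l.Nodup)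
    (hlen : l.length = Fintype.card α) (x : α) : x ∈ l := by
  classical
  have : l.toFinset = Finset.univ :=
    Finset.eq_univ_of_card _ (by rw [List.toFinset_card_of_nodup hl, hlen])
  simpa using congrArg (x ∈ ·) this

theorem List.prod_apply_eq_self {α : Type*} {l : List (Equiv.Perm α)} {x : α}
    (h : ∀ g ∈ l, g x = x) : l.prod x = x := by
  induction l with
  | nil => rfl
  | cons g l ih => simp_all

theorem List.prod_map_append_cons_apply {ι α : Type*} (f : ι → Equiv.Perm α)
    {l₁ l₂ : List ι} {a : ι} {x y : α} (h₁ : ∀ i ∈ l₁, f i y = y) (ha : f a x = y)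
    (h₂ : ∀ i ∈ l₂, f i x = x) : ((l₁ ++ a :: l₂).map f).prod x = y := by
  have hu : (l₁.map f).prod y = y := List.prod_apply_eq_self (by simpa using h₁)
  have hv : (l₂.map f).prod x = x := List.prod_apply_eq_self (by simpa using h₂)
  simp [Perm.mul_apply, hu, hv, ha]

namespace Fin

variable {n : ℕ}

theorem swap_castSucc_succ_apply_of_val_ne (i : Fin n) {x : Fin (n + 1)}
    (h : x.val ≠ i.val) (h' : x.val ≠ i.val + 1) : swap i.castSucc i.succ x = x :=
  swap_apply_of_ne_of_ne (fun e => h (by simp [e])) (fun e => h' (by simp [e]))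

theorem swap_castSucc_succ_apply_zero {i : Fin n} (hi : i.val ≠ 0) :
    swap i.castSucc i.succ 0 = 0 :=
  swap_castSucc_succ_apply_of_val_ne i (by simpa using hi.symm) (by simp)

theorem swap_castSucc_succ_apply_one {i : Fin n} (hi₀ : i.val ≠ 0) (hi₁ : i.val ≠ 1) :
    swap i.castSucc i.succ 1 = 1 := by
  obtain ⟨m, rfl⟩ := Nat.exists_eq_add_of_lt i.pos
  exact swap_castSucc_succ_apply_of_val_ne i (by rw [val_one]; omega) (by rw [val_one]; omega)

theorem swap_castSucc_succ_mk_zero (h : 0 < n) :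
    swap (castSucc ⟨0, h⟩) (succ ⟨0, h⟩) = swap (0 : Fin (n + 1)) 1 := by
  obtain ⟨m, rfl⟩ := Nat.exists_eq_add_of_lt h
  rfl

end Fin

/-- Let `w` be the product, in an arbitrary order, of all the standard Coxeter
generators (adjacent transpositions) of the symmetric group on `n + 1 ≥ 3` letters.
Then either `w` sends the first letter to the second, or the second to the first. -/
theorem prod_coxeter_generators_first_letters
    (n : ℕ) (hn : 2 ≤ n) (l : List (Fin n)) (hnd : l.Nodup) (hlen : l.length = n) :
    ((l.map fun i => Equiv.swap (i.castSucc : Fin (n + 1)) i.succ).prod) 0 = 1 ∨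
    ((l.map fun i => Equiv.swap (i.castSucc : Fin (n + 1)) i.succ).prod) 1 = 0 := by
  have hpos : 0 < n := Nat.zero_lt_of_lt hn
  obtain ⟨l₁, l₂, rfl⟩ := List.mem_iff_append.mp <|
    hnd.mem_of_length_eq_card (hlen.trans (Fintype.card_fin n).symm) ⟨0, hpos⟩
  obtain ⟨h₀, hnd⟩ := List.nodup_cons.mp (List.nodup_middle.mp hnd)
  rw [List.mem_append, not_or] at h₀
  have h₁ : (⟨1, hn⟩ : Fin n) ∉ l₁ ∨ (⟨1, hn⟩ : Fin n) ∉ l₂ := by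
    by_contra! h
    exact List.disjoint_of_nodup_append hnd h.1 h.2
  have val_ne : ∀ {k : Fin n} {l : List (Fin n)}, k ∉ l → ∀ i ∈ l, i.val ≠ k.val :=
    fun hk i hi => Fin.val_ne_of_ne (ne_of_mem_of_not_mem hi hk)
  rcases h₁ with h₁ | h₁
  · refine .inl <| List.prod_map_append_cons_apply _
      (fun i hi => Fin.swap_castSucc_succ_apply_one (val_ne h₀.1 i hi) (val_ne h₁ i hi))
      (by rw [Fin.swap_castSucc_succ_mk_zero hpos, swap_apply_left])
      (fun i hi => Fin.swap_castSucc_succ_apply_zero (val_ne h₀.2 i hi))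
  · refine .inr <| List.prod_map_append_cons_apply _
      (fun i hi => Fin.swap_castSucc_succ_apply_zero (val_ne h₀.1 i hi))
      (by rw [Fin.swap_castSucc_succ_mk_zero hpos, swap_apply_right])
      (fun i hi => Fin.swap_castSucc_succ_apply_one (val_ne h₀.2 i hi) (val_ne h₁ i hi))
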